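/- Let n ≥ 1, S = ℚ[x_1,…,x_n], and let M_n ⊆ S^{n+1} be the spline module of the fan P_2(A_n). Then M_n is a free S-module of rank n + 1 admitting a basis consisting of homogeneous elements of degrees exactly 0, 1, 2, …, n (one basis element of each degree). Consequently, as an S-module, the rational equivariant Chow cohomology A*_T(X_{P_2(A_n)})_ℚ ≅ C^0(P_2(A_n)) is isomorphic to ⊕_{i=0}^{n} S(−i). -/

import Mathlib

open MvPolynomial

/-- The ring `S = ℚ[x_1,…,x_n]`. -/
abbrev S (n : ℕ) : Type := MvPolynomial (Fin n) ℚ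

/-- The Billera–Rose spline module `M_n = C^0(P_2(A_n)) ⊆ S^{n+1}`: tuples
`(f_0, f_1, …, f_n)` with `x_i ∣ f_0 - f_i` for `1 ≤ i ≤ n` and
`x_i - x_j ∣ f_i - f_j` for `1 ≤ i < j ≤ n`. -/
noncomputable def splineModule (n : ℕ) : Submodule (S n) (Fin (n + 1) → S n) where
  carrier := {f | (∀ i : Fin n, X i ∣ f 0 - f i.succ) ∧
    ∀ i j : Fin n, i < j → (X i - X j) ∣ f i.succ - f j.succ}
  add_mem' := by
    rintro a b ⟨ha1, ha2⟩ ⟨hb1, hb2⟩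
    refine ⟨fun i => ?_, fun i j hij => ?_⟩
    · simpa [sub_add_sub_comm] using dvd_add (ha1 i) (hb1 i)
    · simpa [sub_add_sub_comm] using dvd_add (ha2 i j hij) (hb2 i j hij)
  zero_mem' := by
    refine ⟨fun i => ?_, fun i j _ => ?_⟩ <;> simp
  smul_mem' := by
    rintro c f ⟨h1, h2⟩
    refine ⟨fun i => ?_, fun i j hij => ?_⟩
    · simpa [smul_eq_mul, mul_sub] using (h1 i).mul_left c
    · simpa [smul_eq_mul, mul_sub] using (h2 i j hij).mul_left c

/-!
With `p = (0, x_1, …, x_n)`, a tuple `f` lies in `splineModule n` iff `p i - p j ∣ f i - f j`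
for all `i, j`. The differences `p i - p j` are pairwise non-associated primes, so Newton
interpolation writes every such `f` as `(g (p 0), …, g (p n))` for a polynomial `g ∈ S[t]` of
degree `≤ n`, and `g` is unique because the Vandermonde determinant of the distinct `p i` is
nonzero. Hence the coefficient vectors of `g` give a basis, whose `k`-th element
`(p 0 ^ k, …, p n ^ k)` is homogeneous of degree `k`.
-/

open Matrix

section CompleteSplines

variable {R ι : Type*} [CommRing R]

/-- Generalized splines on the complete graph on `ι` whose edge `{i, j}` carries the label
`p i - p j`. -/
def completeSplines (p : ι → R) : Submodule R (ι → R) where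
  carrier := {f | ∀ i j, p i - p j ∣ f i - f j}
  add_mem' ha hb i j := by simpa [add_sub_add_comm] using dvd_add (ha i j) (hb i j)
  zero_mem' := by simp
  smul_mem' c f hf i j := by simpa [mul_sub] using (hf i j).mul_left c

theorem mem_completeSplines_iff_lt [LinearOrder ι] {p f : ι → R} :
    f ∈ completeSplines p ↔ ∀ i j, i < j → p i - p j ∣ f i - f j := by
  refine ⟨fun hf i j _ => hf i j, fun hf i j => ?_⟩
  rcases lt_trichotomy i j with hij | rfl | hji
  · exact hf i j hij
  · simp
  · rw [← neg_sub, neg_dvd, dvd_sub_comm]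
    exact hf j i hji

theorem vandermonde_mulVec_mem_completeSplines {n : ℕ} (p a : Fin n → R) :
    vandermonde p *ᵥ a ∈ completeSplines p := fun i j => by
  simp only [mulVec, dotProduct, vandermonde_apply, ← Finset.sum_sub_distrib, ← sub_mul]
  exact Finset.dvd_sum fun k _ => (sub_dvd_pow_sub_pow _ _ _).mul_right _

/-- `da` and `db` are the divided differences of `f` at `a` and `b` with respect to `c`. -/
theorem dvd_sub_of_eq_mul_of_eq_mul [DecompositionMonoid R] {a b c fa fb fc da db : R}
    (hcop : IsRelPrime (a - b) (a - c)) (hf : a - b ∣ fa - fb)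
    (hda : fa - fc = (a - c) * da) (hdb : fb - fc = (b - c) * db) : a - b ∣ da - db := by
  refine hcop.dvd_of_dvd_mul_left ?_
  have hkey : (a - c) * (da - db) = (fa - fb) - (a - b) * db := by
    linear_combination hdb - hda
  rw [hkey]
  exact dvd_sub hf (dvd_mul_right _ _)

/-- Newton interpolation: the new interpolant is `f 0 + (X - p 0) * g`, where `g` interpolates
the divided differences `(f (i + 1) - f 0) / (p (i + 1) - p 0)`. -/
theorem exists_polynomial_eval_eq [DecompositionMonoid R] {m : ℕ} {p f : Fin (m + 1) → R}
    (hp : ∀ i j k, i ≠ j → i ≠ k → j ≠ k → IsRelPrime (p i - p j) (p i - p k))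
    (hf : f ∈ completeSplines p) :
    ∃ g : Polynomial R, g.natDegree ≤ m ∧ ∀ j, g.eval (p j) = f j := by
  induction m with
  | zero =>
    refine ⟨Polynomial.C (f 0), by simp, fun j => ?_⟩
    rw [Fin.fin_one_eq_zero j, Polynomial.eval_C]
  | succ m ih =>
    choose d hd using fun i : Fin (m + 1) => hf i.succ 0
    have hdiv : d ∈ completeSplines (p ∘ Fin.succ) := fun i j => by
      rcases eq_or_ne i j with rfl | hij
      · simp
      exact dvd_sub_of_eq_mul_of_eq_mul
        (hp _ _ 0 (Fin.succ_injective _ |>.ne hij) (Fin.succ_ne_zero i) (Fin.succ_ne_zero j))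
        (hf _ _) (hd i) (hd j)
    obtain ⟨g, hdeg, heval⟩ := ih
      (fun i j k hij hik hjk => hp _ _ _ (Fin.succ_injective _ |>.ne hij)
        (Fin.succ_injective _ |>.ne hik) (Fin.succ_injective _ |>.ne hjk)) hdiv
    refine ⟨Polynomial.C (f 0) + (Polynomial.X - Polynomial.C (p 0)) * g, ?_, fun j => ?_⟩
    · refine (Polynomial.natDegree_add_le _ _).trans (max_le (by simp) ?_)
      refine Polynomial.natDegree_mul_le.trans ?_
      have hXC := Polynomial.natDegree_X_sub_C_le (p 0)
      omega
    · induction j using Fin.cases with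
      | zero => simp
      | succ i =>
        simp only [Polynomial.eval_add, Polynomial.eval_C, Polynomial.eval_mul,
          Polynomial.eval_sub, Polynomial.eval_X]
        rw [heval]
        linear_combination -(hd i)

theorem exists_vandermonde_mulVec_eq [DecompositionMonoid R] {m : ℕ} {p f : Fin (m + 1) → R}
    (hp : ∀ i j k, i ≠ j → i ≠ k → j ≠ k → IsRelPrime (p i - p j) (p i - p k))
    (hf : f ∈ completeSplines p) : ∃ a, vandermonde p *ᵥ a = f := by
  obtain ⟨g, hdeg, heval⟩ := exists_polynomial_eval_eq hp hf
  refine ⟨fun k => g.coeff k, funext fun j => ?_⟩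
  rw [← heval, Polynomial.eval_eq_sum_range' (Nat.lt_succ_of_le hdeg),
    ← Fin.sum_univ_eq_sum_range]
  simp only [mulVec, dotProduct, vandermonde_apply, mul_comm]

theorem exists_basis_completeSplines [IsDomain R] [DecompositionMonoid R] {m : ℕ}
    {p : Fin (m + 1) → R} (hinj : Function.Injective p)
    (hp : ∀ i j k, i ≠ j → i ≠ k → j ≠ k → IsRelPrime (p i - p j) (p i - p k)) :
    ∃ b : Module.Basis (Fin (m + 1)) R (completeSplines p),
      ∀ k j, (b k : Fin (m + 1) → R) j = p j ^ (k : ℕ) := by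
  classical
  let ℓ := (vandermonde p).mulVecLin.codRestrict _ (vandermonde_mulVec_mem_completeSplines p)
  have hℓinj : Function.Injective ℓ := by
    rw [← LinearMap.ker_eq_bot, LinearMap.ker_eq_bot']
    exact fun a ha => eq_zero_of_mulVec_eq_zero (det_vandermonde_ne_zero_iff.mpr hinj)
      (congrArg Subtype.val ha)
  have hℓsurj : Function.Surjective ℓ := fun ⟨f, hf⟩ =>
    (exists_vandermonde_mulVec_eq hp hf).imp fun _ ha => Subtype.ext ha
  refine ⟨(Pi.basisFun R _).map (LinearEquiv.ofBijective ℓ ⟨hℓinj, hℓsurj⟩), fun k j => ?_⟩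
  rw [Module.Basis.map_apply, Pi.basisFun_apply]
  change (vandermonde p *ᵥ Pi.single k 1) j = _
  rw [mulVec_single_one, col_apply, vandermonde_apply]

end CompleteSplines

theorem MvPolynomial.prime_X_sub_X {σ R : Type*} [CommRing R] [IsDomain R] {i j : σ}
    (hij : i ≠ j) : Prime (X i - X j : MvPolynomial σ R) := by
  classical
  let e := (renameEquiv R (Equiv.optionSubtypeNe i).symm).trans (optionEquivLeft R {b // b ≠ i})
  have he : e (X i - X j) = Polynomial.X - Polynomial.C (X ⟨j, hij.symm⟩) := by
    simp [e, Equiv.optionSubtypeNe_symm_of_ne hij.symm, optionEquivLeft_X_some,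
      optionEquivLeft_X_none]
  rw [← MulEquiv.prime_iff e.toMulEquiv]
  exact he ▸ Polynomial.prime_X_sub_C _

noncomputable def splineNodes (n : ℕ) : Fin (n + 1) → S n := Fin.cons 0 X

@[simp] theorem splineNodes_zero (n : ℕ) : splineNodes n 0 = 0 := rfl

@[simp] theorem splineNodes_succ (n : ℕ) (i : Fin n) : splineNodes n i.succ = X i := rfl

theorem splineNodes_injective (n : ℕ) : Function.Injective (splineNodes n) :=
  Fin.cons_injective_iff.mpr ⟨fun ⟨i, hi⟩ => X_ne_zero i hi, X_injective⟩

theorem isHomogeneous_splineNodes (n : ℕ) (j : Fin (n + 1)) :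
    (splineNodes n j).IsHomogeneous 1 := by
  induction j using Fin.cases with
  | zero => exact isHomogeneous_zero _ _ _
  | succ i => exact isHomogeneous_X _ i

theorem prime_splineNodes_sub {n : ℕ} {i j : Fin (n + 1)} (hij : i ≠ j) :
    Prime (splineNodes n i - splineNodes n j) := by
  induction i using Fin.cases with
  | zero =>
    induction j using Fin.cases with
    | zero => exact absurd rfl hij
    | succ t => simpa using (X_prime (i := t)).neg
  | succ s =>
    induction j using Fin.cases with
    | zero => simpa using X_prime
    | succ t => simpa using prime_X_sub_X (R := ℚ) (ne_of_apply_ne Fin.succ hij)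

theorem exists_eval_splineNodes_eq_iff_ne {n : ℕ} (k : Fin (n + 1)) :
    ∃ (v : Fin n → ℚ) (c : ℚ), ∀ l, eval v (splineNodes n l) = c ↔ l ≠ k := by
  classical
  induction k using Fin.cases with
  | zero =>
    refine ⟨1, 1, fun l => ?_⟩
    induction l using Fin.cases <;> simp
  | succ t =>
    refine ⟨Pi.single t 1, 0, fun l => ?_⟩
    induction l using Fin.cases with
    | zero => simp [(Fin.succ_ne_zero t).symm]
    | succ s => simp [Pi.single_apply]

theorem splineNodes_sub_not_dvd {n : ℕ} {i j k : Fin (n + 1)} (hik : i ≠ k) (hjk : j ≠ k) :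
    ¬ splineNodes n i - splineNodes n j ∣ splineNodes n i - splineNodes n k := by
  obtain ⟨v, c, hv⟩ := exists_eval_splineNodes_eq_iff_ne k
  intro hdvd
  have := map_dvd (eval v) hdvd
  simp only [map_sub, (hv i).mpr hik, (hv j).mpr hjk, sub_self, zero_dvd_iff, sub_eq_zero] at this
  exact (hv k).mp this.symm rfl

theorem isRelPrime_splineNodes_sub {n : ℕ} {i j k : Fin (n + 1)} (hij : i ≠ j) (hik : i ≠ k)
    (hjk : j ≠ k) :
    IsRelPrime (splineNodes n i - splineNodes n j) (splineNodes n i - splineNodes n k) :=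
  (prime_splineNodes_sub hij).irreducible.isRelPrime_iff_not_dvd.mpr
    (splineNodes_sub_not_dvd hik hjk)

theorem splineModule_eq_completeSplines (n : ℕ) :
    splineModule n = completeSplines (splineNodes n) := by
  ext f
  rw [mem_completeSplines_iff_lt]
  refine ⟨fun ⟨hf₀, hf⟩ i j hij => ?_, fun hf => ⟨fun i => ?_, fun i j hij => ?_⟩⟩
  · induction j using Fin.cases with
    | zero => exact absurd hij (Fin.not_lt_zero i)
    | succ t =>
      induction i using Fin.cases with
      | zero => simpa using hf₀ t
      | succ s => simpa using hf s t (Fin.succ_lt_succ_iff.mp hij)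
  · simpa using hf 0 i.succ (Fin.succ_pos i)
  · simpa using hf i.succ j.succ (Fin.succ_lt_succ_iff.mpr hij)

theorem spline_module_free_with_exponents (n : ℕ) :
    ∃ b : Module.Basis (Fin (n + 1)) (S n) (splineModule n),
      ∀ k : Fin (n + 1), ∀ j : Fin (n + 1),
        ((b k : Fin (n + 1) → S n) j).IsHomogeneous (k : ℕ) := by
  obtain ⟨b, hb⟩ := exists_basis_completeSplines (splineNodes_injective n)
    fun _ _ _ => isRelPrime_splineNodes_sub
  refine ⟨b.map (LinearEquiv.ofEq _ _ (splineModule_eq_completeSplines n).symm), fun k j => ?_⟩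
  rw [Module.Basis.map_apply, LinearEquiv.coe_ofEq_apply, hb]
  simpa using (isHomogeneous_splineNodes n j).pow (k : ℕ)
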